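/- Associahedra are 2-short: for any two faces F, G of the associahedron K(n) (n ≥ 2) with F ⊴ G, one has dim F + dim G ≤ n − 2; equivalently, every length-2 face chain in K(n) has positive excess. -/
import Mathlib


/-- Plane binary trees: a single leaf, or `V₁ ∧ V₂` for plane binary trees `V₁, V₂`. -/
inductive PBT : Type
  | leaf : PBT
  | node : PBT → PBT → PBT

/-- Number of leaves of a plane binary tree. -/
def PBT.leaves : PBT → ℕ
  | .leaf => 1
  | .node a b => a.leaves + b.leaves

/-- `1` if the root is an internal vertex, `0` if it is a leaf. -/
def PBT.isInternal : PBT → ℕ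
  | .leaf => 0
  | .node _ _ => 1

/-- Number of left-leaning internal edges: edges joining an internal vertex to
its left child, that child being internal as well. -/
def PBT.leftE : PBT → ℕ
  | .leaf => 0
  | .node a b => a.leftE + b.leftE + a.isInternal

/-- Number of right-leaning internal edges: edges joining an internal vertex to
its right child, that child being internal as well. -/
def PBT.rightE : PBT → ℕ
  | .leaf => 0
  | .node a b => a.rightE + b.rightE + b.isInternal

/-- One right rotation applied to some subtree: somewhere a subtree
`(a ∧ b) ∧ c` is replaced by `a ∧ (b ∧ c)`. -/
inductive RightRot : PBT → PBT → Prop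
  | rot (a b c : PBT) : RightRot (.node (.node a b) c) (.node a (.node b c))
  | left {a a' : PBT} (b : PBT) : RightRot a a' → RightRot (.node a b) (.node a' b)
  | right (a : PBT) {b b' : PBT} : RightRot b b' → RightRot (.node a b) (.node a b')

/-- The Tamari order: reflexive-transitive closure of right rotation. -/
def Tamari : PBT → PBT → Prop := Relation.ReflTransGen RightRot

mutual
  /-- Schröder trees: plane rooted trees in which every internal vertex has at
  least two children (encoding faces of associahedra). -/
  inductive STree : Type
    | leaf : STree
    | node : SForest → STree
  /-- Lists of at least two Schröder trees (children of an internal vertex). -/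
  inductive SForest : Type
    | two : STree → STree → SForest
    | cons : STree → SForest → SForest
end

mutual
  /-- Number of leaves of a Schröder tree. -/
  def STree.leavesS : STree → ℕ
    | .leaf => 1
    | .node f => f.leavesF
  def SForest.leavesF : SForest → ℕ
    | .two a b => a.leavesS + b.leavesS
    | .cons a f => a.leavesS + f.leavesF
end

mutual
  /-- Number of internal vertices of a Schröder tree. -/
  def STree.vS : STree → ℕ
    | .leaf => 0
    | .node f => 1 + f.vF
  def SForest.vF : SForest → ℕ
    | .two a b => a.vS + b.vS
    | .cons a f => a.vS + f.vF
end

mutual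
  /-- `top t`: the binary tree obtained by recursively replacing each internal
  vertex with children `t₁, …, t_c` by the right comb `t₁ ∧ (t₂ ∧ (… ∧ t_c))`. -/
  def STree.top : STree → PBT
    | .leaf => .leaf
    | .node f => f.topF
  def SForest.topF : SForest → PBT
    | .two a b => .node a.top b.top
    | .cons a f => .node a.top f.topF
end

mutual
  /-- `bottom t`: the binary tree obtained by recursively replacing each internal
  vertex with children `t₁, …, t_c` by the left comb `((…(t₁ ∧ t₂)…) ∧ t_c)`. -/
  def STree.bottom : STree → PBT
    | .leaf => .leaf
    | .node f => f.bottomF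
  def SForest.bottomF : SForest → PBT
    | .two a b => .node a.bottom b.bottom
    | .cons a f => SForest.bottomAux a.bottom f
  def SForest.bottomAux : PBT → SForest → PBT
    | acc, .two a b => .node (.node acc a.bottom) b.bottom
    | acc, .cons a f => SForest.bottomAux (.node acc a.bottom) f
end

theorem PBT.isInternal_le_one : ∀ T : PBT, T.isInternal ≤ 1
  | .leaf => Nat.zero_le 1
  | .node _ _ => le_refl _

@[simp] theorem PBT.isInternal_node (a b : PBT) : (PBT.node a b).isInternal = 1 := rfl
@[simp] theorem PBT.isInternal_leaf : PBT.leaf.isInternal = 0 := rfl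

theorem PBT.edge_sum : ∀ T : PBT, T.leftE + T.rightE + T.isInternal + 1 = T.leaves
  | .leaf => rfl
  | .node a b => by
    have ha := PBT.edge_sum a
    have hb := PBT.edge_sum b
    simp only [PBT.leftE, PBT.rightE, PBT.leaves, PBT.isInternal_node]
    omega

theorem RightRot.node {T T' : PBT} (h : RightRot T T') :
    T.isInternal = 1 ∧ T'.isInternal = 1 := by
  cases h <;> exact ⟨rfl, rfl⟩

theorem RightRot.invar {T T' : PBT} (h : RightRot T T') :
    T'.leaves = T.leaves ∧ T.rightE ≤ T'.rightE := by
  induction h with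
  | rot a b c =>
    constructor
    · simp [PBT.leaves]; omega
    · have := b.isInternal_le_one
      simp only [PBT.rightE, PBT.isInternal_node]; omega
  | left b hr ih =>
    have := hr.node
    simp only [PBT.leaves, PBT.rightE]
    omega
  | right a hr ih =>
    have := hr.node
    simp only [PBT.leaves, PBT.rightE]
    omega

theorem Tamari.invar {T T' : PBT} (h : Tamari T T') :
    T'.leaves = T.leaves ∧ T.rightE ≤ T'.rightE := by
  induction h with
  | refl => exact ⟨rfl, le_refl _⟩
  | tail _ h2 ih =>
    obtain ⟨e1, e2⟩ := ih
    obtain ⟨f1, f2⟩ := h2.invar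
    exact ⟨f1.trans e1, e2.trans f2⟩

mutual
theorem STree.top_leaves : ∀ t : STree, t.top.leaves = t.leavesS
  | .leaf => rfl
  | .node f => SForest.topF_leaves f
theorem SForest.topF_leaves : ∀ f : SForest, f.topF.leaves = f.leavesF
  | .two a b => by
    simp only [SForest.topF, PBT.leaves, SForest.leavesF, STree.top_leaves]
  | .cons a f => by
    simp only [SForest.topF, PBT.leaves, SForest.leavesF, STree.top_leaves,
      SForest.topF_leaves]
end

mutual
theorem STree.bottom_leaves : ∀ t : STree, t.bottom.leaves = t.leavesS
  | .leaf => rfl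
  | .node f => SForest.bottomF_leaves f
theorem SForest.bottomF_leaves : ∀ f : SForest, f.bottomF.leaves = f.leavesF
  | .two a b => by
    simp only [SForest.bottomF, PBT.leaves, SForest.leavesF, STree.bottom_leaves]
  | .cons a f => by
    have := SForest.bottomAux_leaves f a.bottom
    simp only [SForest.bottomF, SForest.leavesF, STree.bottom_leaves a] at *
    omega
theorem SForest.bottomAux_leaves : ∀ (f : SForest) (acc : PBT),
    (SForest.bottomAux acc f).leaves = acc.leaves + f.leavesF
  | .two a b, acc => by
    simp only [SForest.bottomAux, PBT.leaves, SForest.leavesF, STree.bottom_leaves]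
    omega
  | .cons a f, acc => by
    have := SForest.bottomAux_leaves f (.node acc a.bottom)
    simp only [SForest.bottomAux, PBT.leaves, SForest.leavesF,
      STree.bottom_leaves] at *
    omega
end

mutual
theorem STree.top_leftE : ∀ t : STree, t.top.leftE + t.top.isInternal ≤ t.vS
  | .leaf => le_refl _
  | .node f => by
    have := SForest.topF_leftE f
    have : (SForest.topF f).isInternal ≤ 1 := PBT.isInternal_le_one _
    simp only [STree.top, STree.vS]
    omega
theorem SForest.topF_leftE : ∀ f : SForest, f.topF.leftE ≤ f.vF
  | .two a b => by
    have ha := STree.top_leftE a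
    have hb := STree.top_leftE b
    simp only [SForest.topF, PBT.leftE, SForest.vF]
    omega
  | .cons a f => by
    have ha := STree.top_leftE a
    have hf := SForest.topF_leftE f
    simp only [SForest.topF, PBT.leftE, SForest.vF]
    omega
end

mutual
theorem STree.bottom_rightE : ∀ t : STree, t.bottom.rightE + t.bottom.isInternal ≤ t.vS
  | .leaf => le_refl _
  | .node f => by
    have := SForest.bottomF_rightE f
    have : (SForest.bottomF f).isInternal ≤ 1 := PBT.isInternal_le_one _
    simp only [STree.bottom, STree.vS]
    omega
theorem SForest.bottomF_rightE : ∀ f : SForest, f.bottomF.rightE ≤ f.vF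
  | .two a b => by
    have ha := STree.bottom_rightE a
    have hb := STree.bottom_rightE b
    simp only [SForest.bottomF, PBT.rightE, SForest.vF]
    omega
  | .cons a f => by
    have ha := STree.bottom_rightE a
    have hf := SForest.bottomAux_rightE f a.bottom
    simp only [SForest.bottomF, SForest.vF]
    omega
theorem SForest.bottomAux_rightE : ∀ (f : SForest) (acc : PBT),
    (SForest.bottomAux acc f).rightE ≤ acc.rightE + f.vF
  | .two a b, acc => by
    have ha := STree.bottom_rightE a
    have hb := STree.bottom_rightE b
    simp only [SForest.bottomAux, PBT.rightE, SForest.vF]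
    omega
  | .cons a f, acc => by
    have ha := STree.bottom_rightE a
    have hf := SForest.bottomAux_rightE f (.node acc a.bottom)
    simp only [SForest.bottomAux, PBT.rightE, SForest.vF] at *
    omega
end

mutual
theorem STree.vS_lt_leaves : ∀ t : STree, t.vS + 1 ≤ t.leavesS
  | .leaf => le_refl _
  | .node f => by
    have := SForest.vF_lt_leaves f
    simp only [STree.vS, STree.leavesS]
    omega
theorem SForest.vF_lt_leaves : ∀ f : SForest, f.vF + 2 ≤ f.leavesF
  | .two a b => by
    have ha := STree.vS_lt_leaves a
    have hb := STree.vS_lt_leaves b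
    simp only [SForest.vF, SForest.leavesF]
    omega
  | .cons a f => by
    have ha := STree.vS_lt_leaves a
    have hf := SForest.vF_lt_leaves f
    simp only [SForest.vF, SForest.leavesF]
    omega
end

theorem SForest.bottomAux_isInternal : ∀ (f : SForest) (acc : PBT),
    (SForest.bottomAux acc f).isInternal = 1
  | .two _ _, _ => rfl
  | .cons a f, acc => SForest.bottomAux_isInternal f _

theorem SForest.bottomF_isInternal : ∀ f : SForest, f.bottomF.isInternal = 1
  | .two _ _ => rfl
  | .cons a f => SForest.bottomAux_isInternal f _

/-- Associahedra are 2-short: for any faces `F, G` of `K(n)` (`n ≥ 2`),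
encoded by Schröder trees with `n` leaves and of dimensions
`dim t = n − 1 − v(t)`, if `F ⊴ G` (i.e. `top F ≤ bottom G` in the Tamari
order) then `dim F + dim G ≤ n − 2`; equivalently, the length-2 face chain
`F ⊴ G` has positive excess `(n−3) − (dim F − 1) − (dim G − 1)`. -/
theorem associahedra_two_short (n : ℕ) (hn : 2 ≤ n) (F G : STree)
    (hF : F.leavesS = n) (hG : G.leavesS = n)
    (h : Tamari F.top G.bottom) :
    (n - 1 - F.vS) + (n - 1 - G.vS) ≤ n - 2 ∧
    0 < ((n : ℤ) - 3) - (((n : ℤ) - 1 - F.vS) - 1) - (((n : ℤ) - 1 - G.vS) - 1) := by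
  -- leaves counts
  have hFl : F.top.leaves = n := by rw [STree.top_leaves, hF]
  have hGl : G.bottom.leaves = n := by rw [STree.bottom_leaves, hG]
  -- edge sums
  have eF := F.top.edge_sum
  have eG := G.bottom.edge_sum
  -- Tamari monotonicity
  obtain ⟨_, hmono⟩ := h.invar
  -- structural bounds
  have hFt := F.top_leftE
  have hGb := G.bottom_rightE
  -- G is internal (has ≥ 2 leaves)
  have hGint : G.bottom.isInternal = 1 := by
    cases G with
    | leaf => simp [STree.leavesS] at hG; omega
    | node f => exact SForest.bottomF_isInternal f
  have key : n ≤ F.vS + G.vS := by omega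
  have hvF := F.vS_lt_leaves
  have hvG := G.vS_lt_leaves
  rw [hF] at hvF
  rw [hG] at hvG
  constructor
  · omega
  · push_cast [hF, hG] at *
    omega
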